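/- arXiv:1312.2617 — 2 statements merged into one kernel-verified Lean document; each statement's English description precedes it below -/
import Mathlib

section
/- Fix an integer a ≥ 1. Let m ≥ 1 be an integer, let P(Y) ∈ R[Y] be an m-triangular polynomial of degree d, and let k_0, …, k_a ≥ 0 be integers. Then the polynomial P(Y)·Π_{j=0}^{a} (U^{(j)}(Y))^{k_j} is (m + Σ_{j=0}^{a} k_j)-triangular, where U^{(j)} denotes the j-th derivative of U with respect to Y. In particular, if n = Σ_{j=0}^{a} k_j and Σ_{j=0}^{a} j·k_j = n, then this polynomial is (m+n)-triangular of degree d + (a−1)n. -/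
open Polynomial

noncomputable section

/-- The ring `R = ℂ[u₀,…,u_{a−1}][u_a, u_a⁻¹]`: Laurent polynomials in `u_a`
over the polynomial ring `ℂ[u₀,…,u_{a−1}]`. -/
abbrev LaurentRing (a : ℕ) : Type := LaurentPolynomial (MvPolynomial (Fin a) ℂ)

/-- The generators `u_0, …, u_a` of `R`; `u i` for `i < a` is the polynomial variable `u_i`,
and `u a` is the Laurent variable `u_a`. -/
noncomputable def u (a : ℕ) (i : ℕ) : LaurentRing a :=
  if h : i < a then LaurentPolynomial.C (MvPolynomial.X (⟨i, h⟩ : Fin a))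
  else LaurentPolynomial.T 1

/-- `P ∈ R[Y]` is `m`-triangular of degree `d` if `deg P = d ≥ a` and for `d − a ≤ l ≤ d`
one has `p_l = q_l u_a^{m−1} u_{a−d+l} + P_l` with `q_l ∈ ℚ`, `q_l > 0`, and
`P_l ∈ ℂ[u_{a−d+l+1},…,u_a]`; for `l = d` this means `p_d = q_d u_a^m`. -/
def IsTriangular (a m d : ℕ) (P : Polynomial (LaurentRing a)) : Prop :=
  P.natDegree = d ∧ a ≤ d ∧
  (∃ q : ℚ, 0 < q ∧ P.coeff d = algebraMap ℚ (LaurentRing a) q * (u a a) ^ m) ∧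
  (∀ l, d - a ≤ l → l < d →
    ∃ (q : ℚ) (Pl : LaurentRing a), 0 < q ∧
      Pl ∈ Algebra.adjoin ℂ (u a '' {i : ℕ | a - (d - l) + 1 ≤ i ∧ i ≤ a}) ∧
      P.coeff l = algebraMap ℚ (LaurentRing a) q *
        ((u a a) ^ (m - 1) * u a (a - (d - l))) + Pl)


/-- The polynomial `U(Y) = Σ_{j=0}^{a} u_j Y^j ∈ R[Y]`. -/
noncomputable def Upoly (a : ℕ) : Polynomial (LaurentRing a) :=
  ∑ j ∈ Finset.range (a + 1), Polynomial.C (u a j) * Polynomial.X ^ j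

/-!
Multiplying an `m`-triangular `P` of degree `d` by `U^{(j)}` gives an `(m+1)`-triangular
polynomial of degree `d + (a - j)`, and the theorem follows by induction on the factors.
The coefficient of `Y^t` in `U^{(j)}` is a positive integer multiple of `u_{t+j}`, its leading
one a multiple of `u_a`. Hence, in the coefficient of `Y^{d+a-j-δ}` of the product, exactly two
products carry the variable `u_{a-δ}`: `p_{d-δ}` times the leading coefficient, and
`p_d = q u_a^m` times the coefficient of `Y^{a-j-δ}`. Both are nonnegative rational multiples of
`u_a^m u_{a-δ}`, the first a positive one, up to terms in `ℂ[u_{a-δ+1},…,u_a]`; every other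
product lies in `ℂ[u_{a-δ+1},…,u_a]` or vanishes.
-/

theorem Polynomial.coeff_mul_eq_sum_range {R : Type*} [CommSemiring R] (P Q : R[X]) {b l : ℕ}
    (hQ : Q.natDegree ≤ b) (hbl : b ≤ l) :
    (P * Q).coeff l = ∑ t ∈ Finset.range (b + 1), P.coeff (l - t) * Q.coeff t := by
  rw [mul_comm, coeff_mul, Finset.Nat.sum_antidiagonal_eq_sum_range_succ
    (fun i j => Q.coeff i * P.coeff j)]
  refine (Finset.sum_subset (Finset.range_subset_range.mpr (by omega)) fun t _ ht => ?_).symm.trans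
    (Finset.sum_congr rfl fun t _ => mul_comm _ _)
  rw [Finset.mem_range, not_lt] at ht
  rw [coeff_eq_zero_of_natDegree_lt (by omega), zero_mul]

def nonnegRatMulAdd {A : Type*} [Semiring A] [Algebra ℚ A] (S : AddSubmonoid A) (x : A) :
    AddSubmonoid A where
  carrier := {y | ∃ c : ℚ, 0 ≤ c ∧ ∃ e ∈ S, y = algebraMap ℚ A c * x + e}
  add_mem' := by
    rintro _ _ ⟨c, hc, e, he, rfl⟩ ⟨c', hc', e', he', rfl⟩
    exact ⟨c + c', add_nonneg hc hc', e + e', S.add_mem he he', by rw [map_add, add_mul]; abel⟩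
  zero_mem' := ⟨0, le_rfl, 0, S.zero_mem, by simp⟩

theorem Subalgebra.algebraMap_rat_mem {A : Type*} [Semiring A] [Algebra ℂ A] [Algebra ℚ A]
    [IsScalarTower ℚ ℂ A] (S : Subalgebra ℂ A) (q : ℚ) : algebraMap ℚ A q ∈ S := by
  rw [IsScalarTower.algebraMap_apply ℚ ℂ A]
  exact S.algebraMap_mem _

section Triangular

variable {a m d : ℕ} {P : Polynomial (LaurentRing a)}

theorem u_self_ne_zero (a : ℕ) : u a a ≠ 0 := by
  rw [u, dif_neg (lt_irrefl a)]
  exact (LaurentPolynomial.isUnit_T 1).ne_zero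

theorem algebraMap_mul_u_self_pow_ne_zero {q : ℚ} (hq : q ≠ 0) (n : ℕ) :
    algebraMap ℚ (LaurentRing a) q * u a a ^ n ≠ 0 :=
  mul_ne_zero ((_root_.map_ne_zero _).mpr hq) (pow_ne_zero n (u_self_ne_zero a))

/-- `ℂ[u_{a-δ+1},…,u_a]`; `IsTriangular` asks for `P_l ∈ topVarsAlgebra a (d - l)`. -/
def topVarsAlgebra (a δ : ℕ) : Subalgebra ℂ (LaurentRing a) :=
  Algebra.adjoin ℂ (u a '' {i : ℕ | a - δ + 1 ≤ i ∧ i ≤ a})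

theorem topVarsAlgebra_mono {δ δ' : ℕ} (h : δ ≤ δ') : topVarsAlgebra a δ ≤ topVarsAlgebra a δ' :=
  Algebra.adjoin_mono (Set.image_mono fun _ hi => ⟨le_trans (by omega) hi.1, hi.2⟩)

theorem u_mem_topVarsAlgebra {δ i : ℕ} (h₁ : a - δ + 1 ≤ i) (h₂ : i ≤ a) :
    u a i ∈ topVarsAlgebra a δ :=
  Algebra.subset_adjoin ⟨i, ⟨h₁, h₂⟩, rfl⟩

theorem coeff_Upoly (a i : ℕ) : (Upoly a).coeff i = if i ≤ a then u a i else 0 := by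
  simp only [Upoly, finsetSum_coeff, coeff_C_mul, coeff_X_pow, mul_ite, mul_one, mul_zero,
    Finset.sum_ite_eq, Finset.mem_range, Nat.lt_add_one_iff]

theorem coeff_iterate_derivative_Upoly (a j t : ℕ) :
    (derivative^[j] (Upoly a)).coeff t =
      if t + j ≤ a then ((t + j).descFactorial j : LaurentRing a) * u a (t + j) else 0 := by
  rw [coeff_iterate_derivative, coeff_Upoly, nsmul_eq_mul, mul_ite, mul_zero]

theorem natDegree_iterate_derivative_Upoly_le (a j : ℕ) :
    (derivative^[j] (Upoly a)).natDegree ≤ a - j :=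
  natDegree_le_iff_coeff_eq_zero.mpr fun t ht => by
    rw [coeff_iterate_derivative_Upoly, if_neg (by omega)]

theorem coeff_iterate_derivative_Upoly_sub {j : ℕ} (hj : j ≤ a) :
    (derivative^[j] (Upoly a)).coeff (a - j) = (a.descFactorial j : LaurentRing a) * u a a := by
  rw [coeff_iterate_derivative_Upoly, Nat.sub_add_cancel hj, if_pos le_rfl]

theorem IsTriangular.coeff_mem_topVarsAlgebra (hP : IsTriangular a m d P) {s δ : ℕ}
    (hs : d - a ≤ s) (hsd : s < d) (hδ : d - s < δ) (hδa : δ ≤ a) :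
    P.coeff s ∈ topVarsAlgebra a δ := by
  obtain ⟨q, Ps, -, hPs, hcoeff⟩ := hP.2.2.2 s hs hsd
  have hua : u a a ∈ topVarsAlgebra a δ := u_mem_topVarsAlgebra (by omega) le_rfl
  rw [hcoeff]
  exact add_mem (mul_mem (Subalgebra.algebraMap_rat_mem _ q)
    (mul_mem (pow_mem hua _) (u_mem_topVarsAlgebra (by omega) (by omega))))
    (topVarsAlgebra_mono hδ.le hPs)

theorem IsTriangular.coeff_mul_coeff_iterate_derivative_mem (hP : IsTriangular a m d P)
    {j t l δ : ℕ} (ht : t + j < a) (hl : l + δ = d + (a - j)) (hδa : δ ≤ a) :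
    P.coeff (l - t) * (derivative^[j] (Upoly a)).coeff t ∈
      nonnegRatMulAdd (topVarsAlgebra a δ).toAddSubmonoid (u a a ^ m * u a (a - δ)) := by
  have ⟨hdeg, had, ⟨q, hq, htop⟩, _⟩ := hP
  rw [coeff_iterate_derivative_Upoly, if_pos ht.le]
  rcases lt_trichotomy (l - t) d with hs | hs | hs
  · have hmem : P.coeff (l - t) * ((t + j).descFactorial j * u a (t + j)) ∈ topVarsAlgebra a δ :=
      mul_mem (hP.coeff_mem_topVarsAlgebra (by omega) hs (by omega) hδa)
        (mul_mem (natCast_mem _ _) (u_mem_topVarsAlgebra (by omega) ht.le))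
    exact ⟨0, le_rfl, _, hmem, by simp⟩
  · -- `p_d = q u_a^m` meets `u_{t+j} = u_{a-δ}`
    refine ⟨q * (t + j).descFactorial j, by positivity, 0, zero_mem _, ?_⟩
    rw [hs, htop, show t + j = a - δ by omega, map_mul, map_natCast, add_zero]
    ring
  · rw [coeff_eq_zero_of_natDegree_lt (by omega), zero_mul]
    exact zero_mem _

theorem IsTriangular.mul_iterate_derivative_Upoly (hm : 1 ≤ m) (hP : IsTriangular a m d P)
    {j : ℕ} (hj : j ≤ a) :
    IsTriangular a (m + 1) (d + (a - j)) (P * derivative^[j] (Upoly a)) := by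
  have ⟨hdeg, had, ⟨q, hq, htop⟩, hmid⟩ := hP
  set Q := derivative^[j] (Upoly a)
  set c := a.descFactorial j
  have hc : (0 : ℚ) < c := by exact_mod_cast Nat.descFactorial_pos.mpr hj
  have hQtop : Q.coeff (a - j) = (c : LaurentRing a) * u a a := coeff_iterate_derivative_Upoly_sub hj
  have hQdeg : Q.natDegree ≤ a - j := natDegree_iterate_derivative_Upoly_le a j
  have hPQtop : (P * Q).coeff (d + (a - j)) =
      algebraMap ℚ (LaurentRing a) (q * c) * u a a ^ (m + 1) := by
    rw [coeff_mul_add_eq_of_natDegree_le hdeg.le hQdeg, htop, hQtop, map_mul, map_natCast]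
    ring
  refine ⟨natDegree_eq_of_le_of_coeff_ne_zero (natDegree_mul_le_of_le hdeg.le hQdeg) ?_,
    by omega, ⟨q * c, by positivity, hPQtop⟩, fun l hl hld => ?_⟩
  · rw [hPQtop]
    exact algebraMap_mul_u_self_pow_ne_zero (by positivity) _
  set δ := d + (a - j) - l
  have hlow : ∑ t ∈ Finset.range (a - j), P.coeff (l - t) * Q.coeff t ∈
      nonnegRatMulAdd (topVarsAlgebra a δ).toAddSubmonoid (u a a ^ m * u a (a - δ)) :=
    sum_mem fun t ht => hP.coeff_mul_coeff_iterate_derivative_mem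
      (by rw [Finset.mem_range] at ht; omega) (by omega) (by omega)
  obtain ⟨c', hc', e, he, hsum⟩ := hlow
  obtain ⟨q', Pδ, hq', hPδ, hcoeff⟩ := hmid (d - δ) (by omega) (by omega)
  rw [Nat.sub_sub_self (by omega : δ ≤ d)] at hPδ hcoeff
  refine ⟨c' + q' * c, e + Pδ * (c * u a a), by positivity,
    add_mem he (mul_mem hPδ (mul_mem (natCast_mem _ _) (u_mem_topVarsAlgebra (by omega) le_rfl))),
    ?_⟩
  have hpow : u a a ^ m = u a a ^ (m - 1) * u a a := by rw [← pow_succ, Nat.sub_add_cancel hm]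
  rw [coeff_mul_eq_sum_range P Q hQdeg (by omega), Finset.sum_range_succ, hsum,
    show l - (a - j) = d - δ by omega, hcoeff, hQtop, map_add, map_mul, map_natCast,
    Nat.add_sub_cancel, hpow]
  ring

theorem IsTriangular.mul_pow_iterate_derivative_Upoly (hm : 1 ≤ m) (hP : IsTriangular a m d P)
    {j : ℕ} (hj : j ≤ a) (k : ℕ) :
    IsTriangular a (m + k) (d + (a - j) * k) (P * (derivative^[j] (Upoly a)) ^ k) := by
  induction k with
  | zero => simpa using hP
  | succ k ih =>
    rw [← add_assoc, mul_add_one, ← add_assoc, pow_succ, ← mul_assoc]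
    exact ih.mul_iterate_derivative_Upoly (by omega) hj

theorem IsTriangular.mul_prod_pow_iterate_derivative_Upoly (hm : 1 ≤ m)
    (hP : IsTriangular a m d P) (k : ℕ → ℕ) {s : Finset ℕ} (hs : ∀ j ∈ s, j ≤ a) :
    IsTriangular a (m + ∑ j ∈ s, k j) (d + ∑ j ∈ s, (a - j) * k j)
      (P * ∏ j ∈ s, (derivative^[j] (Upoly a)) ^ k j) := by
  classical
  induction s using Finset.induction_on with
  | empty => simpa using hP
  | insert j s hjs ih =>
    have ih := ih fun i hi => hs i (Finset.mem_insert_of_mem hi)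
    rw [Finset.sum_insert hjs, Finset.sum_insert hjs, Finset.prod_insert hjs, add_comm (k j),
      add_comm ((a - j) * k j), ← add_assoc, ← add_assoc, ← mul_assoc, mul_right_comm P]
    exact ih.mul_pow_iterate_derivative_Upoly (by omega) (hs j (Finset.mem_insert_self j s)) (k j)

end Triangular

theorem sum_range_sub_mul_add_sum_range_mul (a : ℕ) (k : ℕ → ℕ) :
    ∑ j ∈ Finset.range (a + 1), (a - j) * k j + ∑ j ∈ Finset.range (a + 1), j * k j =
      a * ∑ j ∈ Finset.range (a + 1), k j := by
  rw [← Finset.sum_add_distrib, Finset.mul_sum]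
  refine Finset.sum_congr rfl fun j hj => ?_
  rw [← add_mul, Nat.sub_add_cancel (Finset.mem_range_succ_iff.mp hj)]

theorem mul_prod_derivatives_isTriangular_general (a : ℕ) (m : ℕ) (hm : 1 ≤ m) (d : ℕ)
    (P : Polynomial (LaurentRing a)) (hP : IsTriangular a m d P) (k : ℕ → ℕ) :
    IsTriangular a (m + ∑ j ∈ Finset.range (a + 1), k j)
      (d + ∑ j ∈ Finset.range (a + 1), (a - j) * k j)
      (P * ∏ j ∈ Finset.range (a + 1), (Polynomial.derivative^[j] (Upoly a)) ^ (k j)) ∧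
    ∀ n : ℕ, (∑ j ∈ Finset.range (a + 1), k j) = n →
      (∑ j ∈ Finset.range (a + 1), j * k j) = n →
      IsTriangular a (m + n) (d + (a - 1) * n)
        (P * ∏ j ∈ Finset.range (a + 1), (Polynomial.derivative^[j] (Upoly a)) ^ (k j)) := by
  have h := hP.mul_prod_pow_iterate_derivative_Upoly hm k
    fun j hj => Finset.mem_range_succ_iff.mp hj
  refine ⟨h, fun n hk hjk => ?_⟩
  have hdeg : ∑ j ∈ Finset.range (a + 1), (a - j) * k j = (a - 1) * n := by
    have := sum_range_sub_mul_add_sum_range_mul a k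
    rw [hk, hjk] at this
    rw [Nat.sub_one_mul]
    omega
  rwa [hk, hdeg] at h

/-- if `P` is `m`-triangular of degree `d` and `k_0,…,k_a ≥ 0` are integers,
then `P(Y)·Π_{j=0}^{a} (U^{(j)}(Y))^{k_j}` is `(m + Σ k_j)`-triangular (its degree being
`d + Σ (a−j)·k_j`).  In particular, if `n = Σ_{j=0}^{a} k_j` and `Σ_{j=0}^{a} j·k_j = n`,
this polynomial is `(m+n)`-triangular of degree `d + (a−1)·n`. -/
theorem mul_prod_derivatives_isTriangular (a : ℕ) (ha : 1 ≤ a) (m : ℕ) (hm : 1 ≤ m) (d : ℕ)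
    (P : Polynomial (LaurentRing a)) (hP : IsTriangular a m d P) (k : ℕ → ℕ) :
    IsTriangular a (m + ∑ j ∈ Finset.range (a + 1), k j)
      (d + ∑ j ∈ Finset.range (a + 1), (a - j) * k j)
      (P * ∏ j ∈ Finset.range (a + 1), (Polynomial.derivative^[j] (Upoly a)) ^ (k j)) ∧
    ∀ n : ℕ, (∑ j ∈ Finset.range (a + 1), k j) = n →
      (∑ j ∈ Finset.range (a + 1), j * k j) = n →
      IsTriangular a (m + n) (d + (a - 1) * n)
        (P * ∏ j ∈ Finset.range (a + 1), (Polynomial.derivative^[j] (Upoly a)) ^ (k j)) :=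
  mul_prod_derivatives_isTriangular_general a m hm d P hP k
end
end

section
/- For all integers m, n ≥ 0 with m + n ≥ 1, one has the identity in R[Y]: m! · U(Y)^{m+n−1} · v_m^{(n)}(Y) = (−1)^m · U(Y)^{bm} · w_{m+n, bm}(Y), where ^{(n)} denotes the n-th derivative with respect to Y. (This is the identity v_m^{(n)}(Y) = ((−1)^m/m!) · U(Y)^{bm−m−n+1} · w_{m+n,bm}(Y) cleared of the possibly negative power of U.) -/
open Polynomial

noncomputable section

/-- The polynomials `w_{n,λ}`: `w_{0,λ} = 1/(λ+1)` and
`w_{n,λ} = (λ−n+2)·U′·w_{n−1,λ} + U·w_{n−1,λ}′` for `n ≥ 1`. -/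
noncomputable def wpoly {R : Type*} [CommRing R] [Algebra ℚ R]
    (U : Polynomial R) : ℕ → ℕ → Polynomial R
  | 0, lam => Polynomial.C (algebraMap ℚ R (1 / ((lam : ℚ) + 1)))
  | n + 1, lam =>
      ((lam : ℤ) - n + 1) • (Polynomial.derivative U * wpoly U n lam)
        + U * Polynomial.derivative (wpoly U n lam)

/-- The polynomials `v_m`: `v_0 = U` and
`v_m = −Σ_{j=1}^{m} (U^{bj}/j!)·v_{m−j}^{(j)}` for `m ≥ 1`. -/
noncomputable def vpoly {R : Type*} [CommRing R] [Algebra ℚ R]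
    (b : ℕ) (U : Polynomial R) : ℕ → Polynomial R
  | 0 => U
  | m + 1 =>
      -∑ j ∈ Finset.range (m + 1),
        Polynomial.C (algebraMap ℚ R (1 / ((j + 1).factorial : ℚ))) * U ^ (b * (j + 1)) *
          Polynomial.derivative^[j + 1] (vpoly b U (m - j))
  decreasing_by exact Nat.lt_succ_of_le (Nat.sub_le m j)

/-!
The recursion for `v_m` has the Lagrange-inversion type solution
`v_m = (-1)^m / ((bm+1) m!) · (U^{bm+1})^{(m)}`. Substituting it, the recursion becomes the
vanishing of `Σ_k (-1)^k C(m,k) T^{m-k} (T^k g)^{(i)}` for `i < m` (with `T = U^b`), which is the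
`i`-th `y`-derivative of `(T(x) - T(y))^m g(y)` at `y = x`, and is proved by induction on `i`.
Independently, `U^n (U^{λ+1})^{(n+1)} = (λ+1) U^λ w_{n+1,λ}` by induction on `n`, and the theorem
is the combination of the two with `λ = bm`.
-/

open Finset
open scoped Nat

section CommRing
variable {R : Type*} [CommRing R]

theorem sum_antidiagonal_alternating_choose_mul_iterate_derivative (T g : R[X]) {i m : ℕ}
    (him : i < m) :
    ∑ p ∈ antidiagonal m,
      ((-1 : ℤ) ^ p.1 * m.choose p.1) • (T ^ p.2 * derivative^[i] (T ^ p.1 * g)) = 0 := by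
  induction i generalizing m g with
  | zero =>
    have hpow : ∀ p ∈ antidiagonal m, T ^ p.2 * derivative^[0] (T ^ p.1 * g) = T ^ m * g := by
      intro p hp
      rw [Function.iterate_zero_apply, ← mul_assoc, ← pow_add, add_comm, mem_antidiagonal.1 hp]
    rw [sum_congr rfl fun p hp => by rw [hpow p hp], ← sum_smul,
      Nat.sum_antidiagonal_eq_sum_range_succ (fun k _ => (-1 : ℤ) ^ k * m.choose k),
      Int.alternating_sum_range_choose_of_ne (by omega), zero_smul]
  | succ i ih =>
    obtain ⟨M, rfl⟩ : ∃ M, m = M + 1 := ⟨m - 1, by omega⟩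
    have hleibniz : ∀ k l : ℕ, T ^ l * derivative^[i + 1] (T ^ k * g) =
        T ^ l * derivative^[i] (derivative (T ^ k) * g) +
          T ^ l * derivative^[i] (T ^ k * derivative g) := by
      intro k l
      rw [Function.iterate_succ_apply, derivative_mul, iterate_map_add, mul_add]
    have hshift : ∀ k l : ℕ, ((-1 : ℤ) ^ (k + 1) * (M + 1).choose (k + 1)) •
        (T ^ l * derivative^[i] (derivative (T ^ (k + 1)) * g)) =
        (-(M + 1 : ℤ)) • (((-1 : ℤ) ^ k * M.choose k) •
          (T ^ l * derivative^[i] (T ^ k * (derivative T * g)))) := by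
      intro k l
      have hchoose := congrArg (Nat.cast : ℕ → R[X]) (Nat.add_one_mul_choose_eq M k)
      rw [derivative_pow_succ, mul_assoc, mul_assoc, iterate_derivative_C_mul]
      simp only [zsmul_eq_mul, map_add, map_natCast, map_one]
      push_cast at hchoose ⊢
      linear_combination ((-1) ^ k * (T ^ l * derivative^[i] (T ^ k * (derivative T * g)))) * hchoose
    simp only [hleibniz, smul_add, sum_add_distrib, ih (derivative g) (m := M + 1) (by omega),
      add_zero, Nat.sum_antidiagonal_succ, pow_zero, derivative_one, zero_mul, hshift]
    rw [← smul_sum, ih _ (by omega)]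
    simp only [iterate_map_zero, mul_zero, smul_zero, add_zero]

theorem iterate_derivative_pow_succ (U : R[X]) (k e : ℕ) :
    derivative^[k + 1] (U ^ (e + 1)) = (e + 1) • derivative^[k] (U ^ e * derivative U) := by
  rw [Function.iterate_succ_apply, derivative_pow_succ, mul_assoc, iterate_derivative_C_mul]
  simp only [nsmul_eq_mul, map_add, map_natCast, map_one, Nat.cast_add, Nat.cast_one]

end CommRing

section RatAlgebra
variable {R : Type*} [CommRing R] [Algebra ℚ R]

theorem vpoly_succ_eq_neg_sum_antidiagonal (b : ℕ) (U : R[X]) (m : ℕ) :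
    vpoly b U (m + 1) = -∑ p ∈ antidiagonal m,
      (1 / (p.2 + 1)! : ℚ) • (U ^ (b * (p.2 + 1)) * derivative^[p.2 + 1] (vpoly b U p.1)) := by
  rw [vpoly, ← Nat.sum_antidiagonal_swap]
  simp only [Prod.fst_swap, Prod.snd_swap]
  rw [Nat.sum_antidiagonal_eq_sum_range_succ (fun j k =>
      (1 / (j + 1)! : ℚ) • (U ^ (b * (j + 1)) * derivative^[j + 1] (vpoly b U k)))]
  simp only [Algebra.smul_def, Polynomial.algebraMap_apply, mul_assoc]

theorem vpoly_eq_smul_iterate_derivative (b : ℕ) (U : R[X]) (m : ℕ) :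
    vpoly b U m = ((-1) ^ m / ((b * m + 1) * m ! : ℚ)) • derivative^[m] (U ^ (b * m + 1)) := by
  induction m using Nat.strong_induction_on with
  | _ m ih =>
  cases m with
  | zero => simp [vpoly]
  | succ M =>
    have hterm : ∀ p ∈ antidiagonal M,
        (1 / (p.2 + 1)! : ℚ) • (U ^ (b * (p.2 + 1)) * derivative^[p.2 + 1] (vpoly b U p.1)) =
        (1 / (M + 1)! : ℚ) • (((-1 : ℤ) ^ p.1 * (M + 1).choose p.1) •
          ((U ^ b) ^ (p.2 + 1) * derivative^[M] ((U ^ b) ^ p.1 * derivative U))) := by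
      rintro ⟨k, j⟩ hkj
      obtain rfl : k + j = M := mem_antidiagonal.1 hkj
      dsimp only
      rw [ih k (by omega), iterate_derivative_smul, ← Function.iterate_add_apply,
        show j + 1 + k = k + j + 1 by omega, iterate_derivative_pow_succ, ← pow_mul, ← pow_mul,
        ← Nat.cast_smul_eq_nsmul ℚ, ← Int.cast_smul_eq_zsmul ℚ]
      simp only [mul_smul_comm, smul_smul]
      congr 1
      push_cast
      rw [add_assoc, Nat.cast_add_choose ℚ]
      field_simp
    have halt := sum_antidiagonal_alternating_choose_mul_iterate_derivative (U ^ b) (derivative U)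
      (lt_add_one M)
    rw [Nat.sum_antidiagonal_succ'] at halt
    rw [vpoly_succ_eq_neg_sum_antidiagonal, sum_congr rfl hterm, ← smul_sum,
      eq_neg_of_add_eq_zero_right halt, iterate_derivative_pow_succ]
    simp only [Nat.choose_self, pow_zero, one_mul, ← pow_mul, smul_neg, neg_neg,
      ← Nat.cast_smul_eq_nsmul ℚ, ← Int.cast_smul_eq_zsmul ℚ, smul_smul]
    congr 1
    push_cast
    field_simp

theorem wpoly_one (U : R[X]) (l : ℕ) : wpoly U 1 l = derivative U := by
  have hinv : ((l - (0 : ℕ) + 1 : ℤ) : ℚ) * (1 / (l + 1)) = 1 := by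
    push_cast [sub_zero]
    field_simp
  rw [wpoly, wpoly, derivative_C, mul_zero, add_zero, mul_comm, ← Polynomial.algebraMap_apply,
    ← Algebra.smul_def, ← Int.cast_smul_eq_zsmul ℚ, smul_smul, hinv, one_smul]

theorem pow_mul_iterate_derivative_pow_eq_smul_wpoly (U : R[X]) (n l : ℕ) :
    U ^ n * derivative^[n + 1] (U ^ (l + 1)) = (l + 1) • (U ^ l * wpoly U (n + 1) l) := by
  induction n with
  | zero => rw [pow_zero, one_mul, iterate_derivative_pow_succ, wpoly_one]; rfl
  | succ n ih =>
    -- Multiplying by `U` before differentiating keeps every exponent of the form `e + 1`.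
    have hmul : U ^ (n + 1) * derivative^[n + 1] (U ^ (l + 1)) =
        (l + 1) • (U ^ (l + 1) * wpoly U (n + 1) l) := by
      rw [pow_succ', mul_assoc, ih, mul_smul_comm, ← mul_assoc, ← pow_succ']
    have hder := congrArg derivative hmul
    rw [derivative_mul, derivative_pow_succ, derivative_smul, derivative_mul,
      derivative_pow_succ] at hder
    rw [Function.iterate_succ_apply', wpoly]
    simp only [nsmul_eq_mul, zsmul_eq_mul, map_add, map_natCast, map_one] at hder ih ⊢
    push_cast at hder ih ⊢
    linear_combination hder - ((n + 1) * derivative U) * ih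

end RatAlgebra

theorem factorial_mul_derivative_vpoly_general (R : Type*) [CommRing R] [Algebra ℚ R]
    (b : ℕ) (U : Polynomial R) (m n : ℕ) (hmn : 1 ≤ m + n) :
    m.factorial • (U ^ (m + n - 1) * Polynomial.derivative^[n] (vpoly b U m))
      = (-1 : ℤ) ^ m • (U ^ (b * m) * wpoly U (m + n) (b * m)) := by
  obtain ⟨s, hs⟩ : ∃ s, m + n = s + 1 := ⟨m + n - 1, by omega⟩
  rw [hs, Nat.add_sub_cancel, vpoly_eq_smul_iterate_derivative, iterate_derivative_smul,
    ← Function.iterate_add_apply, show n + m = s + 1 by omega, mul_smul_comm,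
    pow_mul_iterate_derivative_pow_eq_smul_wpoly, ← Nat.cast_smul_eq_nsmul ℚ,
    ← Nat.cast_smul_eq_nsmul ℚ, ← Int.cast_smul_eq_zsmul ℚ, smul_smul, smul_smul]
  congr 1
  push_cast
  field_simp

/-- for `m, n ≥ 0` with `m + n ≥ 1`,
`m! · U^{m+n−1} · v_m^{(n)} = (−1)^m · U^{bm} · w_{m+n,bm}` in `R[Y]`
(the identity `v_m^{(n)} = ((−1)^m/m!)·U^{bm−m−n+1}·w_{m+n,bm}` cleared of the
possibly negative power of `U`). -/
theorem factorial_mul_derivative_vpoly (R : Type*) [CommRing R] [Algebra ℚ R]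
    (a b : ℕ) (ha : 2 ≤ a) (hb : 2 ≤ b)
    (u : ℕ → R) (U : Polynomial R)
    (hU : U = ∑ j ∈ Finset.range (a + 1), Polynomial.C (u j) * Polynomial.X ^ j)
    (m n : ℕ) (hmn : 1 ≤ m + n) :
    m.factorial • (U ^ (m + n - 1) * Polynomial.derivative^[n] (vpoly b U m))
      = (-1 : ℤ) ^ m • (U ^ (b * m) * wpoly U (m + n) (b * m)) :=
  factorial_mul_derivative_vpoly_general R b U m n hmn
end
end
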